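/- Let X be a random vector in ℝ^d with E[X] = g, E[‖X − g‖²] ≤ σ², and ‖g‖ ≤ λ/2. Define X̃ = clip(X, λ). Then E[‖X̃ − g‖²] ≤ 18σ² and E[‖X̃ − E[X̃]‖²] ≤ 18σ². -/

import Mathlib

/-!
Clipping moves `X` at most three times as far from `g` as it already is: if `‖x‖ ≤ λ` nothing
changes, and otherwise `‖x - g‖ ≥ λ/2` while `‖clip x λ - g‖ ≤ 3λ/2`. Hence
`E‖clip X λ - g‖² ≤ 9σ²`, and by the bias–variance decomposition the spread of `clip X λ` about its
own mean is no larger than about `g`.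
-/

open MeasureTheory

/-- Clipping operator: `clip x λ = min{1, λ/‖x‖} • x` (with `clip 0 λ = 0`). -/
noncomputable def clip {E : Type*} [NormedAddCommGroup E] [InnerProductSpace ℝ E]
    (x : E) (lam : ℝ) : E := (min 1 (lam / ‖x‖)) • x

section Clip

variable {E : Type*} [NormedAddCommGroup E] [InnerProductSpace ℝ E]

theorem clip_of_norm_le {x : E} {lam : ℝ} (hx : ‖x‖ ≤ lam) : clip x lam = x := by
  rcases eq_or_ne x 0 with rfl | hx0
  · simp [clip]
  · have hpos : 0 < ‖x‖ := norm_pos_iff.2 hx0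
    simp [clip, min_eq_left ((one_le_div hpos).2 hx)]

theorem norm_clip_le (x : E) {lam : ℝ} (hlam : 0 ≤ lam) : ‖clip x lam‖ ≤ lam := by
  rcases le_or_gt ‖x‖ lam with hx | hx
  · rwa [clip_of_norm_le hx]
  · have hpos : 0 < ‖x‖ := hlam.trans_lt hx
    rw [clip, norm_smul, min_eq_right ((div_le_one hpos).2 hx.le),
      Real.norm_of_nonneg (div_nonneg hlam hpos.le), div_mul_cancel₀ _ hpos.ne']

theorem norm_clip_sub_le (x : E) {g : E} {lam : ℝ} (hg : ‖g‖ ≤ lam / 2) :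
    ‖clip x lam - g‖ ≤ 3 * ‖x - g‖ := by
  rcases le_or_gt ‖x‖ lam with hx | hx
  · rw [clip_of_norm_le hx]
    linarith [norm_nonneg (x - g)]
  · have hlam : 0 ≤ lam := by linarith [norm_nonneg g]
    have hclip : ‖clip x lam - g‖ ≤ lam + lam / 2 :=
      (norm_sub_le _ _).trans (add_le_add (norm_clip_le x hlam) hg)
    have hfar : lam / 2 ≤ ‖x - g‖ := by linarith [norm_sub_norm_le x g]
    linarith

theorem measurable_clip [MeasurableSpace E] [BorelSpace E] [SecondCountableTopology E]
    (lam : ℝ) : Measurable fun x : E => clip x lam :=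
  (measurable_const.min (measurable_const.div measurable_norm)).smul measurable_id

end Clip

section MeanSquare

variable {Ω E : Type*} [MeasurableSpace Ω] {μ : Measure Ω} [IsProbabilityMeasure μ]
  [NormedAddCommGroup E] [InnerProductSpace ℝ E] [CompleteSpace E]

theorem integral_norm_sub_integral_sq {Y : Ω → E} (hY : Integrable Y μ) (c : E)
    (hYc : Integrable (fun ω => ‖Y ω - c‖ ^ 2) μ) :
    ∫ ω, ‖Y ω - ∫ ω', Y ω' ∂μ‖ ^ 2 ∂μ = ∫ ω, ‖Y ω - c‖ ^ 2 ∂μ - ‖(∫ ω, Y ω ∂μ) - c‖ ^ 2 := by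
  set b := (∫ ω, Y ω ∂μ) - c
  have hYc_int : Integrable (fun ω => Y ω - c) μ := hY.sub (integrable_const c)
  have hinner_int : Integrable (fun ω => 2 * inner ℝ b (Y ω - c)) μ :=
    (hYc_int.const_inner b).const_mul 2
  have hmean_inner : ∫ ω, inner ℝ b (Y ω - c) ∂μ = ‖b‖ ^ 2 := by
    rw [integral_inner hYc_int, integral_sub hY (integrable_const c), integral_const,
      probReal_univ, one_smul, real_inner_self_eq_norm_sq]
  calc ∫ ω, ‖Y ω - ∫ ω', Y ω' ∂μ‖ ^ 2 ∂μ
      = ∫ ω, (‖Y ω - c‖ ^ 2 - 2 * inner ℝ b (Y ω - c) + ‖b‖ ^ 2) ∂μ := by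
        congr 1 with ω
        rw [← sub_sub_sub_cancel_right (Y ω) _ c, norm_sub_sq_real, real_inner_comm]
    _ = ∫ ω, ‖Y ω - c‖ ^ 2 ∂μ - 2 * ∫ ω, inner ℝ b (Y ω - c) ∂μ + ‖b‖ ^ 2 := by
        rw [integral_add _ (integrable_const _), integral_sub hYc hinner_int,
          integral_const_mul, integral_const, probReal_univ, one_smul]
        exact hYc.sub hinner_int
    _ = ∫ ω, ‖Y ω - c‖ ^ 2 ∂μ - ‖b‖ ^ 2 := by
        rw [hmean_inner]
        ring

theorem integral_norm_sub_integral_sq_le {Y : Ω → E} (hY : Integrable Y μ) (c : E)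
    (hYc : Integrable (fun ω => ‖Y ω - c‖ ^ 2) μ) :
    ∫ ω, ‖Y ω - ∫ ω', Y ω' ∂μ‖ ^ 2 ∂μ ≤ ∫ ω, ‖Y ω - c‖ ^ 2 ∂μ := by
  rw [integral_norm_sub_integral_sq hY c hYc]
  exact sub_le_self _ (sq_nonneg _)

end MeanSquare

theorem clipping_variance_of_bounded_variance_general {d : ℕ} {Ω : Type*} [MeasurableSpace Ω]
    (μ : Measure Ω) [IsProbabilityMeasure μ]
    (X : Ω → EuclideanSpace ℝ (Fin d)) (hX : Measurable X)
    (g : EuclideanSpace ℝ (Fin d)) (σ lam : ℝ)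
    (hvarInt : Integrable (fun ω => ‖X ω - g‖ ^ 2) μ)
    (hvar : ∫ ω, ‖X ω - g‖ ^ 2 ∂μ ≤ σ ^ 2)
    (hg : ‖g‖ ≤ lam / 2) :
    (∫ ω, ‖clip (X ω) lam - g‖ ^ 2 ∂μ ≤ 18 * σ ^ 2) ∧
    (∫ ω, ‖clip (X ω) lam - ∫ ω', clip (X ω') lam ∂μ‖ ^ 2 ∂μ ≤ 18 * σ ^ 2) := by
  have hY_meas : Measurable fun ω => clip (X ω) lam := (measurable_clip lam).comp hX
  have hpointwise : ∀ ω, ‖clip (X ω) lam - g‖ ^ 2 ≤ 9 * ‖X ω - g‖ ^ 2 := fun ω => by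
    nlinarith [norm_clip_sub_le (X ω) hg, norm_nonneg (clip (X ω) lam - g)]
  have hYg_int : Integrable (fun ω => ‖clip (X ω) lam - g‖ ^ 2) μ :=
    (hvarInt.const_mul 9).mono' ((hY_meas.sub_const g).norm.pow_const 2).aestronglyMeasurable
      (Filter.Eventually.of_forall fun ω => by
        rw [Real.norm_of_nonneg (sq_nonneg _)]
        exact hpointwise ω)
  have hlam : 0 ≤ lam := by linarith [norm_nonneg g]
  have hY_int : Integrable (fun ω => clip (X ω) lam) μ :=
    (integrable_const lam).mono' hY_meas.aestronglyMeasurable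
      (Filter.Eventually.of_forall fun ω => norm_clip_le _ hlam)
  have hfirst : ∫ ω, ‖clip (X ω) lam - g‖ ^ 2 ∂μ ≤ 18 * σ ^ 2 :=
    calc ∫ ω, ‖clip (X ω) lam - g‖ ^ 2 ∂μ ≤ ∫ ω, 9 * ‖X ω - g‖ ^ 2 ∂μ :=
          integral_mono hYg_int (hvarInt.const_mul 9) hpointwise
      _ = 9 * ∫ ω, ‖X ω - g‖ ^ 2 ∂μ := integral_const_mul 9 _
      _ ≤ 18 * σ ^ 2 := by nlinarith [sq_nonneg σ]
  exact ⟨hfirst, (integral_norm_sub_integral_sq_le hY_int g hYg_int).trans hfirst⟩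

/-- Gorbunov et al. Lemma F.5, variance form: if `E[X] = g`, `E[‖X − g‖²] ≤ σ²`
and `‖g‖ ≤ λ/2`, then `E[‖clip(X,λ) − g‖²] ≤ 18σ²` and
`E[‖clip(X,λ) − E[clip(X,λ)]‖²] ≤ 18σ²`. -/
theorem clipping_variance_of_bounded_variance {d : ℕ} {Ω : Type*} [MeasurableSpace Ω]
    (μ : Measure Ω) [IsProbabilityMeasure μ]
    (X : Ω → EuclideanSpace ℝ (Fin d)) (hX : Measurable X) (hXint : Integrable X μ)
    (g : EuclideanSpace ℝ (Fin d)) (σ lam : ℝ) (hσ : 0 ≤ σ) (hlam : 0 < lam)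
    (hmean : ∫ ω, X ω ∂μ = g)
    (hvarInt : Integrable (fun ω => ‖X ω - g‖ ^ 2) μ)
    (hvar : ∫ ω, ‖X ω - g‖ ^ 2 ∂μ ≤ σ ^ 2)
    (hg : ‖g‖ ≤ lam / 2) :
    (∫ ω, ‖clip (X ω) lam - g‖ ^ 2 ∂μ ≤ 18 * σ ^ 2) ∧
    (∫ ω, ‖clip (X ω) lam - ∫ ω', clip (X ω') lam ∂μ‖ ^ 2 ∂μ ≤ 18 * σ ^ 2) :=
  clipping_variance_of_bounded_variance_general μ X hX g σ lam hvarInt hvar hg
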